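/- arXiv:1606.03320 — 5 statements merged into one kernel-verified Lean document; each statement's English description precedes it below -/
import Mathlib

section
/- Let H' ⊆ H ⊆ G be subgroups of finite index. Then every element of G # H, viewed as a bijection of G, lies in G # H', so G # H is a subgroup of G # H'. Moreover, with X = G/H, X' = G/H', Y = H/H', coset representatives (s_x)_{x∈X} for H in G and (t_y)_{y∈Y} for H' in H, the set {s_x t_y : x ∈ X, y ∈ Y} is a complete set of coset representatives for H' in G; and if ρ_s(α) = (π, (h_x)) then ρ_{s'}(α) = (π', (h'_{x'})) where π'(s_x t_y H') = s_{π(x)} t_{h_x y} H' and h'_{s_x t_y H'} = t__{h_x y}^{-1} h_x t_y, where h_x y denotes the coset h_x t_y H' ∈ Y. -/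
section Plectic

variable {G : Type*} [Group G]

/-- The plectic group `G # H`: bijections of `G` commuting with right translation by `H`. -/
def plectic (G : Type*) [Group G] (H : Subgroup G) : Subgroup (Equiv.Perm G) where
  carrier := {α : Equiv.Perm G | ∀ (g : G), ∀ h ∈ H, α (g * h) = α g * h}
  one_mem' := fun _ _ _ => rfl
  mul_mem' := by
    intro a b ha hb g h hh
    simp only [Equiv.Perm.mul_apply, hb g h hh, ha (b g) h hh]
  inv_mem' := by
    intro a ha g h hh
    apply a.injective
    rw [ha (a⁻¹ g) h hh]
    simp

theorem mem_plectic {H : Subgroup G} {α : Equiv.Perm G} :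
    α ∈ plectic G H ↔ ∀ (g : G), ∀ h ∈ H, α (g * h) = α g * h := Iff.rfl

theorem plectic_apply {H : Subgroup G} (α : plectic G H) (g : G) {h : G} (hh : h ∈ H) :
    (α : Equiv.Perm G) (g * h) = (α : Equiv.Perm G) g * h := α.2 g h hh

/-- The permutation of left cosets `G ⧸ H` induced by an element of the plectic group. -/
def inducedPerm {H : Subgroup G} (α : plectic G H) : Equiv.Perm (G ⧸ H) where
  toFun := Quotient.map' (⇑(α : Equiv.Perm G)) (by
    intro a b hab
    rw [QuotientGroup.leftRel_apply] at hab ⊢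
    have h1 := plectic_apply α a hab
    rw [mul_inv_cancel_left] at h1
    rw [h1, inv_mul_cancel_left]
    exact hab)
  invFun := Quotient.map' (⇑((α⁻¹ : plectic G H) : Equiv.Perm G)) (by
    intro a b hab
    rw [QuotientGroup.leftRel_apply] at hab ⊢
    have h1 := plectic_apply α⁻¹ a hab
    rw [mul_inv_cancel_left] at h1
    rw [h1, inv_mul_cancel_left]
    exact hab)
  left_inv := by
    intro q
    induction q using Quotient.inductionOn' with
    | h g => simp [Quotient.map'_mk'']
  right_inv := by
    intro q
    induction q using Quotient.inductionOn' with
    | h g => simp [Quotient.map'_mk'']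

theorem inducedPerm_mk {H : Subgroup G} (α : plectic G H) (g : G) :
    inducedPerm α (QuotientGroup.mk g) = QuotientGroup.mk ((α : Equiv.Perm G) g) := rfl

/-- `h_x(α) = s_{π(α)(x)}⁻¹ · α(s_x)`. -/
def hcomp {H : Subgroup G} (α : plectic G H) (s : G ⧸ H → G) (x : G ⧸ H) : G :=
  (s (inducedPerm α x))⁻¹ * (α : Equiv.Perm G) (s x)

theorem hcomp_mem {H : Subgroup G} (α : plectic G H) {s : G ⧸ H → G}
    (hs : ∀ x, QuotientGroup.mk (s x) = x) (x : G ⧸ H) : hcomp α s x ∈ H := by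
  simp only [hcomp]
  rw [← QuotientGroup.eq, hs, ← inducedPerm_mk α (s x), hs]

/-- The map `ρ_s` to (the underlying set of) the wreath product. -/
def rhoPair {H : Subgroup G} (s : G ⧸ H → G) (hs : ∀ x, QuotientGroup.mk (s x) = x)
    (α : plectic G H) : Equiv.Perm (G ⧸ H) × ((G ⧸ H) → H) :=
  (inducedPerm α, fun x => ⟨hcomp α s x, hcomp_mem α hs x⟩)

end Plectic

section PlecticRestriction

variable {G : Type*} [Group G] {H K : Subgroup G}

theorem plectic_mono (hKH : K ≤ H) : plectic G H ≤ plectic G K :=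
  fun _ hα g _ hk => hα g _ (hKH hk)

theorem plectic_apply_section_mul (α : plectic G H) (s : G ⧸ H → G) (x : G ⧸ H) {h : G}
    (hh : h ∈ H) :
    (α : Equiv.Perm G) (s x * h) = s (inducedPerm α x) * (hcomp α s x * h) := by
  simp only [plectic_apply α (s x) hh, hcomp, mul_assoc, mul_inv_cancel_left]

theorem bijective_mk_section_mul_section (hKH : K ≤ H) {s : G ⧸ H → G}
    (hs : ∀ x, (s x : G ⧸ H) = x) {t : H ⧸ K.subgroupOf H → H}
    (ht : ∀ y, (t y : H ⧸ K.subgroupOf H) = y) :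
    Function.Bijective (fun p : (G ⧸ H) × (H ⧸ K.subgroupOf H) =>
      (QuotientGroup.mk (s p.1 * (t p.2 : G)) : G ⧸ K)) := by
  convert (Subgroup.quotientEquivProdOfLE' hKH s hs).symm.bijective with ⟨x, y⟩
  conv_rhs => rw [← ht y]
  rfl

end PlecticRestriction

theorem plectic_subgroup_restriction_general (G : Type*) [Group G] (H H' : Subgroup G)
    (hle : H' ≤ H)
    (s : G ⧸ H → G) (hs : ∀ x, QuotientGroup.mk (s x) = x)
    (t : (H ⧸ H'.subgroupOf H) → H)
    (ht : ∀ y, QuotientGroup.mk (t y) = y) :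
    plectic G H ≤ plectic G H' ∧
    Function.Bijective
      (fun p : (G ⧸ H) × (H ⧸ H'.subgroupOf H) =>
        (QuotientGroup.mk (s p.1 * (t p.2 : G)) : G ⧸ H')) ∧
    ∀ (α : plectic G H) (β : plectic G H'),
      (β : Equiv.Perm G) = (α : Equiv.Perm G) →
      ∀ (x : G ⧸ H) (y : H ⧸ H'.subgroupOf H),
        (inducedPerm β (QuotientGroup.mk (s x * (t y : G))) =
          (QuotientGroup.mk (s (inducedPerm α x) *
            (t (QuotientGroup.mk ((⟨hcomp α s x, hcomp_mem α hs x⟩ : H) * t y)) : G)) : G ⧸ H')) ∧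
        ((s (inducedPerm α x) *
            (t (QuotientGroup.mk ((⟨hcomp α s x, hcomp_mem α hs x⟩ : H) * t y)) : G))⁻¹ *
            (α : Equiv.Perm G) (s x * (t y : G)) =
          ((t (QuotientGroup.mk ((⟨hcomp α s x, hcomp_mem α hs x⟩ : H) * t y)))⁻¹ *
            (⟨hcomp α s x, hcomp_mem α hs x⟩ : H) * t y : H)) ∧
        (((t (QuotientGroup.mk ((⟨hcomp α s x, hcomp_mem α hs x⟩ : H) * t y)))⁻¹ *
            (⟨hcomp α s x, hcomp_mem α hs x⟩ : H) * t y : G) ∈ H') := by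
  refine ⟨plectic_mono hle, bijective_mk_section_mul_section hle hs ht, fun α β hβα x y => ?_⟩
  set h : H := ⟨hcomp α s x, hcomp_mem α hs x⟩
  set z : H ⧸ H'.subgroupOf H := QuotientGroup.mk (h * t y)
  have hrem : (((t z)⁻¹ * h * t y : H) : G) ∈ H' := by
    rw [mul_assoc, ← Subgroup.mem_subgroupOf]
    exact QuotientGroup.eq.1 (ht z)
  have hα : (α : Equiv.Perm G) (s x * t y) =
      s (inducedPerm α x) * t z * ((t z)⁻¹ * h * t y : H) := by
    rw [plectic_apply_section_mul α s x (t y).2]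
    push_cast
    group
    rfl
  refine ⟨?_, ?_, hrem⟩
  · rw [inducedPerm_mk, hβα, hα, QuotientGroup.mk_mul_of_mem _ hrem]
  · rw [hα, inv_mul_cancel_left]

/-- For `H' ⊆ H ⊆ G` of finite index: `G # H ≤ G # H'`; products of coset representatives
`s_x t_y` form a complete set of representatives for `H'` in `G`; and `ρ_{s'}` of
`α ∈ G # H` is given by `π'(s_x t_y H') = s_{π(x)} t_{h_x·y} H'` and
`h'_{s_x t_y H'} = t_{h_x·y}⁻¹ h_x t_y ∈ H'`. -/
theorem plectic_subgroup_restriction (G : Type*) [Group G] (H H' : Subgroup G)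
    (hle : H' ≤ H) [H.FiniteIndex] [H'.FiniteIndex]
    (s : G ⧸ H → G) (hs : ∀ x, QuotientGroup.mk (s x) = x)
    (t : (H ⧸ H'.subgroupOf H) → H)
    (ht : ∀ y, QuotientGroup.mk (t y) = y) :
    plectic G H ≤ plectic G H' ∧
    Function.Bijective
      (fun p : (G ⧸ H) × (H ⧸ H'.subgroupOf H) =>
        (QuotientGroup.mk (s p.1 * (t p.2 : G)) : G ⧸ H')) ∧
    ∀ (α : plectic G H) (β : plectic G H'),
      (β : Equiv.Perm G) = (α : Equiv.Perm G) →
      ∀ (x : G ⧸ H) (y : H ⧸ H'.subgroupOf H),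
        (inducedPerm β (QuotientGroup.mk (s x * (t y : G))) =
          (QuotientGroup.mk (s (inducedPerm α x) *
            (t (QuotientGroup.mk ((⟨hcomp α s x, hcomp_mem α hs x⟩ : H) * t y)) : G)) : G ⧸ H')) ∧
        ((s (inducedPerm α x) *
            (t (QuotientGroup.mk ((⟨hcomp α s x, hcomp_mem α hs x⟩ : H) * t y)) : G))⁻¹ *
            (α : Equiv.Perm G) (s x * (t y : G)) =
          ((t (QuotientGroup.mk ((⟨hcomp α s x, hcomp_mem α hs x⟩ : H) * t y)))⁻¹ *
            (⟨hcomp α s x, hcomp_mem α hs x⟩ : H) * t y : H)) ∧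
        (((t (QuotientGroup.mk ((⟨hcomp α s x, hcomp_mem α hs x⟩ : H) * t y)))⁻¹ *
            (⟨hcomp α s x, hcomp_mem α hs x⟩ : H) * t y : G) ∈ H') :=
  plectic_subgroup_restriction_general G H H' hle s hs t ht
end

section
/- Let G be a group, H ⊆ G a subgroup of finite index, u ∈ G, and H' = uHu^{-1}. Then the map [u] : G # H → G # H' defined by ([u]α)(g) = α(gu)·u^{-1} for all g ∈ G is a well-defined group isomorphism, and it depends only on the left coset uH (i.e. if u' = uh with h ∈ H then [u'] = [u]). -/
section PlecticConj

open scoped Pointwise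

variable {G : Type*} [Group G]

theorem Subgroup.map_conj_mul_of_mem {H : Subgroup G} (u : G) {h : G} (hh : h ∈ H) :
    H.map (MulAut.conj (u * h)).toMonoidHom = H.map (MulAut.conj u).toMonoidHom := by
  change MulAut.conj (u * h) • H = MulAut.conj u • H
  rw [map_mul, mul_smul, Subgroup.conj_smul_eq_self_of_mem hh]

theorem conj_mulRight_inv_apply (u : G) (α : Equiv.Perm G) (g : G) :
    MulAut.conj (Equiv.mulRight u⁻¹) α g = α (g * u) * u⁻¹ := by
  simp

/- Conjugating by the right translation `g ↦ g * u⁻¹` carries the right translations by `H`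
onto those by `u H u⁻¹`, hence their commutants onto each other. -/
theorem conj_mulRight_inv_mem_plectic_iff {H : Subgroup G} {u : G} {α : Equiv.Perm G} :
    MulAut.conj (Equiv.mulRight u⁻¹) α ∈ plectic G (H.map (MulAut.conj u).toMonoidHom) ↔
      α ∈ plectic G H := by
  simp only [mem_plectic, conj_mulRight_inv_apply]
  simp only [Subgroup.mem_map, MulEquiv.coe_toMonoidHom, MulAut.conj_apply,
    forall_exists_index, and_imp, forall_apply_eq_imp_iff₂]
  simp only [← mul_assoc, inv_mul_cancel_right, mul_left_inj]
  constructor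
  · intro hα g h hh
    simpa using hα (g * u⁻¹) h hh
  · intro hα g h hh
    exact hα _ h hh

theorem plectic_map_conj_mulRight_inv (H : Subgroup G) (u : G) :
    (plectic G H).map (MulAut.conj (Equiv.mulRight u⁻¹)).toMonoidHom =
      plectic G (H.map (MulAut.conj u).toMonoidHom) := by
  ext β
  rw [Subgroup.mem_map_equiv, ← conj_mulRight_inv_mem_plectic_iff (u := u),
    MulEquiv.apply_symm_apply]

/-- The map `[u] : G # H → G # uHu⁻¹`. -/
def plecticConj (H : Subgroup G) (u : G) :
    plectic G H ≃* plectic G (H.map (MulAut.conj u).toMonoidHom) :=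
  ((MulAut.conj (Equiv.mulRight u⁻¹)).subgroupMap (plectic G H)).trans
    (MulEquiv.subgroupCongr (plectic_map_conj_mulRight_inv H u))

theorem plecticConj_apply (H : Subgroup G) (u : G) (α : plectic G H) (g : G) :
    (plecticConj H u α : Equiv.Perm G) g = (α : Equiv.Perm G) (g * u) * u⁻¹ :=
  conj_mulRight_inv_apply u α g

theorem plectic_apply_mul_mul_inv_of_mem {H : Subgroup G} (α : plectic G H) (g u : G) {h : G}
    (hh : h ∈ H) :
    (α : Equiv.Perm G) (g * (u * h)) * (u * h)⁻¹ = (α : Equiv.Perm G) (g * u) * u⁻¹ := by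
  rw [← mul_assoc, plectic_apply α (g * u) hh]
  group

end PlecticConj

theorem plectic_conj_iso_general (G : Type*) [Group G] (H : Subgroup G) (u : G) :
    ∃ e : plectic G H ≃* plectic G (H.map (MulAut.conj u).toMonoidHom),
      (∀ (α : plectic G H) (g : G),
        ((e α : Equiv.Perm G)) g = (α : Equiv.Perm G) (g * u) * u⁻¹) ∧
      ∀ h ∈ H,
        (H.map (MulAut.conj (u * h)).toMonoidHom = H.map (MulAut.conj u).toMonoidHom) ∧
        ∀ (α : plectic G H) (g : G),
          (α : Equiv.Perm G) (g * (u * h)) * (u * h)⁻¹ =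
            (α : Equiv.Perm G) (g * u) * u⁻¹ :=
  ⟨plecticConj H u, plecticConj_apply H u, fun _ hh =>
    ⟨Subgroup.map_conj_mul_of_mem u hh, fun α g => plectic_apply_mul_mul_inv_of_mem α g u hh⟩⟩

/-- For `u ∈ G` and `H' = uHu⁻¹`, the map `[u] : G # H → G # H'`, `([u]α)(g) = α(gu)u⁻¹`,
is a well-defined group isomorphism depending only on the coset `uH`. -/
theorem plectic_conj_iso (G : Type*) [Group G] (H : Subgroup G) [H.FiniteIndex] (u : G) :
    ∃ e : plectic G H ≃* plectic G (H.map (MulAut.conj u).toMonoidHom),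
      (∀ (α : plectic G H) (g : G),
        ((e α : Equiv.Perm G)) g = (α : Equiv.Perm G) (g * u) * u⁻¹) ∧
      ∀ h ∈ H,
        (H.map (MulAut.conj (u * h)).toMonoidHom = H.map (MulAut.conj u).toMonoidHom) ∧
        ∀ (α : plectic G H) (g : G),
          (α : Equiv.Perm G) (g * (u * h)) * (u * h)⁻¹ =
            (α : Equiv.Perm G) (g * u) * u⁻¹ :=
  plectic_conj_iso_general G H u
end

section
/- Let G be a topological group and H ⊆ G an open subgroup of finite index, with X = G/H. Fix a section s of G → X and endow G # H with the topology transported via ρ_s from the product topology on Sym(X) × H^X (Sym(X) discrete, H^X the product topology). This topology is independent of the choice of section s, and the inclusion G ↪ G # H (by left translations) is continuous. -/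
/-!
Changing the section from `s` to `s'` composes `ρ_s` with conjugation by `(1, t)`,
`t_x = s_x⁻¹ s'_x`, a homeomorphism of `Sym(X) × H^X`; hence both sections induce the same
topology. For the left translations, the `Sym(X)` component of `ρ_s` is the action of `G` on
the finite discrete space `G ⧸ H` (discrete because `H` is open), hence locally constant, and the
`H^X` components are then visibly continuous.
-/

open Equiv

section WreathConj

variable {X K : Type*} [Group K]

/-- Conjugation by `(1, t)` in the wreath product `Sym(X) ⋉ K^X`. -/
def wreathConj (t : X → K) (p : Perm X × (X → K)) : Perm X × (X → K) :=
  (p.1, fun x => (t (p.1 x))⁻¹ * p.2 x * t x)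

theorem continuous_wreathConj [TopologicalSpace K] [IsTopologicalGroup K]
    [TopologicalSpace (Perm X)] [DiscreteTopology (Perm X)] (t : X → K) :
    Continuous (wreathConj t) := by
  refine continuous_fst.prodMk (continuous_pi fun x => ?_)
  have ht : Continuous fun σ : Perm X => t (σ x) := continuous_of_discreteTopology
  exact ((ht.comp continuous_fst).inv.mul
    ((continuous_apply x).comp continuous_snd)).mul continuous_const

end WreathConj

section SectionChange

variable {G : Type*} [Group G] {H : Subgroup G} {s s' : G ⧸ H → G}

def sectionDiff (hs : ∀ x, QuotientGroup.mk (s x) = x) (hs' : ∀ x, QuotientGroup.mk (s' x) = x)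
    (x : G ⧸ H) : H :=
  ⟨(s x)⁻¹ * s' x, QuotientGroup.eq.mp ((hs x).trans (hs' x).symm)⟩

theorem rhoPair_eq_wreathConj_comp (hs : ∀ x, QuotientGroup.mk (s x) = x)
    (hs' : ∀ x, QuotientGroup.mk (s' x) = x) :
    rhoPair s' hs' = wreathConj (sectionDiff hs hs') ∘ rhoPair s hs := by
  funext α
  refine Prod.ext rfl (funext fun x => Subtype.ext ?_)
  have hα : (α : Perm G) (s' x) = (α : Perm G) (s x) * ((s x)⁻¹ * s' x) := by
    simpa only [sectionDiff, mul_inv_cancel_left] using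
      plectic_apply α (s x) (sectionDiff hs hs' x).2
  change (s' (inducedPerm α x))⁻¹ * (α : Perm G) (s' x) =
    ((s (inducedPerm α x))⁻¹ * s' (inducedPerm α x))⁻¹ *
      ((s (inducedPerm α x))⁻¹ * (α : Perm G) (s x)) * ((s x)⁻¹ * s' x)
  rw [hα]
  group

theorem induced_rhoPair_le [TopologicalSpace G] [IsTopologicalGroup G]
    [TopologicalSpace (Perm (G ⧸ H))] [DiscreteTopology (Perm (G ⧸ H))]
    (hs : ∀ x, QuotientGroup.mk (s x) = x) (hs' : ∀ x, QuotientGroup.mk (s' x) = x) :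
    TopologicalSpace.induced (rhoPair s hs) inferInstance ≤
      TopologicalSpace.induced (rhoPair s' hs') inferInstance := by
  rw [rhoPair_eq_wreathConj_comp hs hs', ← induced_compose]
  exact induced_mono (continuous_iff_le_induced.mp (continuous_wreathConj _))

end SectionChange

section LeftTranslation

theorem continuous_toPerm_of_discrete {G X : Type*} [Group G] [MulAction G X]
    [TopologicalSpace G] [TopologicalSpace X] [DiscreteTopology X] [Finite X] [ContinuousSMul G X]
    [TopologicalSpace (Perm X)] [DiscreteTopology (Perm X)] :
    Continuous (MulAction.toPerm : G → Perm X) := by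
  have hcoe : Continuous fun g : G => ⇑(MulAction.toPerm g : Perm X) :=
    continuous_pi fun x => continuous_id.smul continuous_const
  refine continuous_discrete_rng.mpr fun σ => ?_
  have hσ : (MulAction.toPerm : G → Perm X) ⁻¹' {σ} =
      (fun g : G => ⇑(MulAction.toPerm g : Perm X)) ⁻¹' {⇑σ} := by
    ext g
    simp only [Set.mem_preimage, Set.mem_singleton_iff, DFunLike.coe_fn_eq]
  rw [hσ]
  exact (isOpen_discrete _).preimage hcoe

variable (G : Type*) [Group G] (H : Subgroup G)

def mulLeftPlectic (g : G) : plectic G H :=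
  ⟨Equiv.mulLeft g, fun x h _ => (mul_assoc g x h).symm⟩

variable {G H}

theorem inducedPerm_mulLeftPlectic (g : G) :
    inducedPerm (mulLeftPlectic G H g) = MulAction.toPerm g :=
  Equiv.ext fun x => Quotient.inductionOn' x fun _ => rfl

theorem continuous_rhoPair_comp_mulLeftPlectic [TopologicalSpace G] [IsTopologicalGroup G]
    (hH : IsOpen (H : Set G)) [H.FiniteIndex]
    [TopologicalSpace (Perm (G ⧸ H))] [DiscreteTopology (Perm (G ⧸ H))]
    {s : G ⧸ H → G} (hs : ∀ x, QuotientGroup.mk (s x) = x) :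
    Continuous (rhoPair s hs ∘ mulLeftPlectic G H) := by
  have : DiscreteTopology (G ⧸ H) := QuotientGroup.discreteTopology hH
  have hperm : Continuous fun g => inducedPerm (mulLeftPlectic G H g) := by
    simpa only [inducedPerm_mulLeftPlectic] using continuous_toPerm_of_discrete
  refine hperm.prodMk (continuous_pi fun x => Continuous.subtype_mk ?_ _)
  have hsec : Continuous fun σ : Perm (G ⧸ H) => s (σ x) := continuous_of_discreteTopology
  exact (hsec.comp hperm).inv.mul (continuous_mul_const _)

end LeftTranslation

/-- For a topological group `G` and an open finite-index subgroup `H`, the topology on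
`G # H` transported via `ρ_s` from `Sym(X) × H^X` (`Sym(X)` discrete, `H^X` the product
topology) is independent of the section `s`, and the inclusion of `G` by left translations
is continuous. -/
theorem plectic_topology (G : Type*) [Group G] [TopologicalSpace G] [IsTopologicalGroup G]
    (H : Subgroup G) (hH : IsOpen (H : Set G)) [H.FiniteIndex]
    (s s' : G ⧸ H → G)
    (hs : ∀ x, QuotientGroup.mk (s x) = x) (hs' : ∀ x, QuotientGroup.mk (s' x) = x) :
    (TopologicalSpace.induced (rhoPair s hs)
        (@instTopologicalSpaceProd _ _ (⊥ : TopologicalSpace (Equiv.Perm (G ⧸ H)))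
          inferInstance) =
      TopologicalSpace.induced (rhoPair s' hs')
        (@instTopologicalSpaceProd _ _ (⊥ : TopologicalSpace (Equiv.Perm (G ⧸ H)))
          inferInstance)) ∧
    @Continuous G (plectic G H) _
      (TopologicalSpace.induced (rhoPair s hs)
        (@instTopologicalSpaceProd _ _ (⊥ : TopologicalSpace (Equiv.Perm (G ⧸ H)))
          inferInstance))
      (fun g : G => (⟨Equiv.mulLeft g, fun x h _ => (mul_assoc g x h).symm⟩ : plectic G H)) := by
  let : TopologicalSpace (Perm (G ⧸ H)) := ⊥
  have : DiscreteTopology (Perm (G ⧸ H)) := ⟨rfl⟩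
  exact ⟨le_antisymm (induced_rhoPair_le hs hs') (induced_rhoPair_le hs' hs),
    continuous_induced_rng.mpr (continuous_rhoPair_comp_mulLeftPlectic hH hs)⟩
end

section
/- Let G be a group, K ⊆ G a finite-index subgroup, w : G/K → G a section, A an abelian group and f : K → A a homomorphism which is invariant under conjugation by elements of G (f(gkg^{-1}) = f(k) whenever gkg^{-1} ∈ K). For Φ ⊆ G/K and α ∈ G # K define F_Φ(α) = ∏_{φ∈Φ} f(h_φ(α)) where h_φ(α) = w_{αφ}^{-1}α(w_φ). If Φ is stable under α (i.e. αΦ = Φ as sets) for all α in a subgroup P ⊆ G # K, then F_Φ : P → A is a group homomorphism. -/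
/-! By the cocycle relation `h_φ(αβ) = h_{βφ}(α) h_φ(β)`, `F_Φ(αβ)` splits as
`∏_{φ ∈ Φ} f(h_{βφ}(α)) · F_Φ(β)`, and since `β` permutes the finite set `Φ` the first factor is
`F_Φ(α)` after reindexing. -/

theorem finprod_mem_comp_of_image_eq {α M : Type*} [CommMonoid M] {s : Set α} {e : α → α}
    (he : Set.InjOn e s) (hs : e '' s = s) (g : α → M) :
    ∏ᶠ a ∈ s, g (e a) = ∏ᶠ a ∈ s, g a := by
  conv_rhs => rw [← hs]
  exact (finprod_mem_image he).symm

section HalfTransfer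

variable {G : Type*} [Group G] {H : Subgroup G}

theorem inducedPerm_mul (α β : plectic G H) (x : G ⧸ H) :
    inducedPerm (α * β) x = inducedPerm α (inducedPerm β x) := by
  induction x using Quotient.inductionOn' with
  | h g => rfl

def hcompSubgroup (α : plectic G H) {s : G ⧸ H → G} (hs : ∀ x, QuotientGroup.mk (s x) = x)
    (x : G ⧸ H) : H :=
  ⟨hcomp α s x, hcomp_mem α hs x⟩

theorem hcompSubgroup_mul (α β : plectic G H) {s : G ⧸ H → G}
    (hs : ∀ x, QuotientGroup.mk (s x) = x) (x : G ⧸ H) :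
    hcompSubgroup (α * β) hs x = hcompSubgroup α hs (inducedPerm β x) * hcompSubgroup β hs x := by
  have hβ : (β : Equiv.Perm G) (s x) = s (inducedPerm β x) * hcomp β s x := by
    simp [hcomp]
  ext
  change (s (inducedPerm (α * β) x))⁻¹ * (α : Equiv.Perm G) ((β : Equiv.Perm G) (s x)) = _
  rw [hβ, plectic_apply α _ (hcomp_mem β hs x), inducedPerm_mul, ← mul_assoc]
  rfl

/-- `F_Φ(α) = ∏_{φ ∈ Φ} f(h_φ(α))`. -/
noncomputable def halfTransfer {A : Type*} [CommGroup A] (f : H →* A) {s : G ⧸ H → G}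
    (hs : ∀ x, QuotientGroup.mk (s x) = x) (Φ : Set (G ⧸ H)) (α : plectic G H) : A :=
  ∏ᶠ φ ∈ Φ, f (hcompSubgroup α hs φ)

theorem halfTransfer_mul {A : Type*} [CommGroup A] (f : H →* A) {s : G ⧸ H → G}
    (hs : ∀ x, QuotientGroup.mk (s x) = x) {Φ : Set (G ⧸ H)} (hΦ : Φ.Finite)
    (α β : plectic G H) (hβ : inducedPerm β '' Φ = Φ) :
    halfTransfer f hs Φ (α * β) = halfTransfer f hs Φ α * halfTransfer f hs Φ β := by
  simp only [halfTransfer, hcompSubgroup_mul, map_mul]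
  rw [finprod_mem_mul_distrib hΦ, finprod_mem_comp_of_image_eq
    (inducedPerm β).injective.injOn hβ fun φ => f (hcompSubgroup α hs φ)]

end HalfTransfer

theorem halfTransfer_hom_general (G : Type*) [Group G] (K : Subgroup G) [K.FiniteIndex]
    (w : G ⧸ K → G) (hw : ∀ x, QuotientGroup.mk (w x) = x)
    (A : Type*) [CommGroup A] (f : K →* A)
    (Φ : Set (G ⧸ K)) (P : Subgroup (plectic G K))
    (hP : ∀ α : plectic G K, α ∈ P → (inducedPerm α) '' Φ = Φ) :
    ∀ α β : plectic G K, α ∈ P → β ∈ P →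
      (∏ᶠ φ ∈ Φ, f (⟨hcomp (α * β) w φ, hcomp_mem (α * β) hw φ⟩ : K)) =
        (∏ᶠ φ ∈ Φ, f (⟨hcomp α w φ, hcomp_mem α hw φ⟩ : K)) *
          (∏ᶠ φ ∈ Φ, f (⟨hcomp β w φ, hcomp_mem β hw φ⟩ : K)) :=
  fun α β _ hβ => halfTransfer_mul f hw (Set.toFinite Φ) α β (hP β hβ)

/-- If `f : K → A` is conjugation-invariant and `Φ ⊆ G/K` is stable under every element of a
subgroup `P ⊆ G # K`, then `F_Φ(α) = ∏_{φ∈Φ} f(h_φ(α))` is a homomorphism on `P`. -/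
theorem halfTransfer_hom (G : Type*) [Group G] (K : Subgroup G) [K.FiniteIndex]
    (w : G ⧸ K → G) (hw : ∀ x, QuotientGroup.mk (w x) = x)
    (A : Type*) [CommGroup A] (f : K →* A)
    (hf : ∀ (g : G) (k k' : K), (k' : G) = g * (k : G) * g⁻¹ → f k' = f k)
    (Φ : Set (G ⧸ K)) (P : Subgroup (plectic G K))
    (hP : ∀ α : plectic G K, α ∈ P → (inducedPerm α) '' Φ = Φ) :
    ∀ α β : plectic G K, α ∈ P → β ∈ P →
      (∏ᶠ φ ∈ Φ, f (⟨hcomp (α * β) w φ, hcomp_mem (α * β) hw φ⟩ : K)) =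
        (∏ᶠ φ ∈ Φ, f (⟨hcomp α w φ, hcomp_mem α hw φ⟩ : K)) *
          (∏ᶠ φ ∈ Φ, f (⟨hcomp β w φ, hcomp_mem β hw φ⟩ : K)) :=
  halfTransfer_hom_general G K w hw A f Φ P hP
end

section
/- Let k be a Galois extension of ℚ and F ⊆ k a number field, with G = Gal(k/ℚ), H = Gal(k/F), X = G/H ≅ Hom(F, k). The wreath product isomorphism Aut_F(k^X) ≅ Sym(X) ⋉ H^X holds: the map sending (π, (h_x)_{x∈X}) to the automorphism of the F-algebra k^X (with F acting diagonally via F ⊆ k) defined by (a_x)_x ↦ (b_x)_x with b_{π(x)} = h_x(a_x) is a group isomorphism onto Aut_F(k^X). -/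
/-- The wreath product `Sym(X) ⋉ H^X`, with multiplication
`(π₁,(h_x))·(π₂,(k_x)) = (π₁π₂, (h_{π₂(x)}·k_x)_x)`. -/
def Wr (X : Type*) (H : Type*) [Group H] : Type _ := Equiv.Perm X × (X → H)

namespace Wr

variable {X : Type*} {H : Type*} [Group H]

instance : Mul (Wr X H) := ⟨fun a b => (a.1 * b.1, fun x => a.2 (b.1 x) * b.2 x)⟩
instance : One (Wr X H) := ⟨((1 : Equiv.Perm X), fun _ => (1 : H))⟩
instance : Inv (Wr X H) := ⟨fun a => (a.1⁻¹, fun x => (a.2 (a.1⁻¹ x))⁻¹)⟩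

instance instGroup : Group (Wr X H) where
  mul_assoc a b c := by
    refine Prod.ext (mul_assoc a.1 b.1 c.1) ?_
    funext x
    exact mul_assoc _ _ _
  one_mul a := by
    refine Prod.ext (one_mul a.1) ?_
    funext x
    exact one_mul _
  mul_one a := by
    refine Prod.ext (mul_one a.1) ?_
    funext x
    exact mul_one _
  inv_mul_cancel a := by
    refine Prod.ext (inv_mul_cancel a.1) ?_
    funext x
    show (a.2 (a.1⁻¹ (a.1 x)))⁻¹ * a.2 x = 1
    rw [show a.1⁻¹ (a.1 x) = x from a.1.symm_apply_apply x, inv_mul_cancel]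

end Wr

/-! Each coordinate of an `F`-algebra automorphism `ψ` of `k^X` is a ring hom `k^X → k`; its
kernel is prime, and primes of a finite product are pulled back from one factor, so
`ψ a y = g_y (a (τ y))` for an `F`-endomorphism `g_y` of `k`, which is an automorphism because
`k/F` is algebraic. Injectivity of `ψ` makes `τ` onto, hence a permutation of the finite set `X`.
Finally `Gal(k/F)` is identified with the subgroup of `Gal(k/ℚ)` fixing `F`. -/

theorem Pi.exists_ringHom_apply_eq_apply_const {A S X : Type*} [CommRing A] [CommRing S]
    [IsDomain S] [Finite X] (χ : (X → A) →+* S) : ∃ x, ∀ a, χ a = χ (fun _ ↦ a x) := by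
  obtain ⟨x, q, hq⟩ :=
    PrimeSpectrum.exists_comap_evalRingHom_eq ⟨RingHom.ker χ, RingHom.ker_isPrime χ⟩
  have hker : RingHom.ker (Pi.evalRingHom (fun _ ↦ A) x) ≤ RingHom.ker χ :=
    (Ideal.ker_le_comap _).trans (congrArg PrimeSpectrum.asIdeal hq).le
  refine ⟨x, fun a ↦ ?_⟩
  have hmem : a - (fun _ ↦ a x) ∈ RingHom.ker χ := hker (by simp)
  rwa [RingHom.mem_ker, map_sub, sub_eq_zero] at hmem

namespace Wr

variable {X R A : Type*} [CommSemiring R] [Semiring A] [Algebra R A]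

def congrRight {H H' : Type*} [Group H] [Group H'] (e : H ≃* H') : Wr X H ≃* Wr X H' where
  toFun p := (p.1, fun x ↦ e (p.2 x))
  invFun p := (p.1, fun x ↦ e.symm (p.2 x))
  left_inv _ := Prod.ext rfl (funext fun _ ↦ e.symm_apply_apply _)
  right_inv _ := Prod.ext rfl (funext fun _ ↦ e.apply_symm_apply _)
  map_mul' _ _ := Prod.ext rfl (funext fun _ ↦ map_mul e _ _)

def toPiAlgEquiv (p : Wr X (A ≃ₐ[R] A)) : (X → A) ≃ₐ[R] (X → A) where
  toFun a y := p.2 (p.1.symm y) (a (p.1.symm y))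
  invFun a x := (p.2 x).symm (a (p.1 x))
  left_inv _ := funext fun _ ↦ by simp
  right_inv _ := funext fun _ ↦ by simp
  map_mul' _ _ := funext fun _ ↦ map_mul _ _ _
  map_add' _ _ := funext fun _ ↦ map_add _ _ _
  commutes' c := funext fun y ↦ (p.2 (p.1.symm y)).commutes c

theorem toPiAlgEquiv_apply (p : Wr X (A ≃ₐ[R] A)) (a : X → A) (y : X) :
    toPiAlgEquiv p a y = p.2 (p.1.symm y) (a (p.1.symm y)) :=
  rfl

theorem toPiAlgEquiv_mul (p q : Wr X (A ≃ₐ[R] A)) :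
    toPiAlgEquiv (p * q) = toPiAlgEquiv p * toPiAlgEquiv q := by
  ext a y
  show (p.2 (q.1 (q.1.symm (p.1.symm y))) * q.2 _) _ = _
  rw [Equiv.apply_symm_apply]
  rfl

def toPiAlgEquivHom : Wr X (A ≃ₐ[R] A) →* ((X → A) ≃ₐ[R] (X → A)) :=
  MonoidHom.mk' toPiAlgEquiv toPiAlgEquiv_mul

theorem toPiAlgEquivHom_injective [Nontrivial A] :
    Function.Injective (toPiAlgEquivHom : Wr X (A ≃ₐ[R] A) →* _) := by
  classical
  rw [injective_iff_map_eq_one]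
  intro p hp
  have hfix (a : X → A) (x : X) : p.2 x (a x) = a (p.1 x) := by
    simpa [toPiAlgEquivHom, toPiAlgEquiv_apply] using congrFun (AlgEquiv.congr_fun hp a) (p.1 x)
  have hperm : p.1 = 1 := Equiv.ext fun x ↦ by
    show p.1 x = x
    by_contra hne
    simpa [Pi.single_eq_of_ne hne] using hfix (Pi.single x 1) x
  refine Prod.ext hperm (funext fun x ↦ AlgEquiv.ext fun t ↦ ?_)
  show p.2 x t = t
  simpa [hperm] using hfix (fun _ ↦ t) x

theorem toPiAlgEquivHom_surjective {K L : Type*} [Field K] [Field L] [Algebra K L]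
    [Algebra.IsAlgebraic K L] [Finite X] :
    Function.Surjective (toPiAlgEquivHom : Wr X (L ≃ₐ[K] L) →* _) := by
  classical
  intro ψ
  choose τ hτ using fun y ↦
    Pi.exists_ringHom_apply_eq_apply_const ((Pi.evalRingHom _ y).comp ψ.toRingHom)
  let g (y : X) : L →ₐ[K] L := (Pi.evalAlgHom K (fun _ ↦ L) y).comp
    (ψ.toAlgHom.comp (Pi.constAlgHom K X L))
  have hψ (a : X → L) (y : X) : ψ a y = g y (a (τ y)) := hτ y a
  have hτ_surj : Function.Surjective τ := by
    intro x
    by_contra! hx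
    -- otherwise `ψ` would kill `Pi.single x 1`
    have hzero : ψ (Pi.single x 1) = ψ 0 := funext fun y ↦ by
      simp [hψ, Pi.single_eq_of_ne (hx y)]
    simpa using congrFun (ψ.injective hzero) x
  let τe := Equiv.ofBijective τ ⟨Finite.injective_iff_surjective.2 hτ_surj, hτ_surj⟩
  refine ⟨(τe.symm, fun x ↦
    AlgEquiv.ofBijective (g (τe.symm x)) (Algebra.IsAlgebraic.algHom_bijective _)), ?_⟩
  ext a y
  show g (τe.symm (τe y)) (a (τe y)) = ψ a y
  rw [Equiv.symm_apply_apply, hψ]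
  rfl

end Wr

theorem wreath_iso_aut_of_pi_general (k : Type*) [Field k] [NumberField k]
    (F : IntermediateField ℚ k) :
    ∃ Ψ : Wr ((k ≃ₐ[ℚ] k) ⧸ F.fixingSubgroup) F.fixingSubgroup ≃*
        ((((k ≃ₐ[ℚ] k) ⧸ F.fixingSubgroup) → k) ≃ₐ[F]
          (((k ≃ₐ[ℚ] k) ⧸ F.fixingSubgroup) → k)),
      ∀ (p : Wr ((k ≃ₐ[ℚ] k) ⧸ F.fixingSubgroup) F.fixingSubgroup)
        (a : ((k ≃ₐ[ℚ] k) ⧸ F.fixingSubgroup) → k)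
        (y : (k ≃ₐ[ℚ] k) ⧸ F.fixingSubgroup),
        (Ψ p) a y = ((p.2 (p.1.symm y) : k ≃ₐ[ℚ] k)) (a (p.1.symm y)) :=
  ⟨(Wr.congrRight (IntermediateField.fixingSubgroupEquiv F)).trans
      (MulEquiv.ofBijective Wr.toPiAlgEquivHom
        ⟨Wr.toPiAlgEquivHom_injective, Wr.toPiAlgEquivHom_surjective⟩),
    fun _ _ _ ↦ rfl⟩

/-- The wreath product `Sym(X) ⋉ H^X` is isomorphic to `Aut_F(k^X)` (with `F` acting
diagonally via `F ⊆ k`), by sending `(π,(h_x))` to `(a_x)_x ↦ (b_x)_x` with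
`b_{π(x)} = h_x(a_x)`. -/
theorem wreath_iso_aut_of_pi (k : Type*) [Field k] [NumberField k] [IsGalois ℚ k]
    (F : IntermediateField ℚ k) :
    ∃ Ψ : Wr ((k ≃ₐ[ℚ] k) ⧸ F.fixingSubgroup) F.fixingSubgroup ≃*
        ((((k ≃ₐ[ℚ] k) ⧸ F.fixingSubgroup) → k) ≃ₐ[F]
          (((k ≃ₐ[ℚ] k) ⧸ F.fixingSubgroup) → k)),
      ∀ (p : Wr ((k ≃ₐ[ℚ] k) ⧸ F.fixingSubgroup) F.fixingSubgroup)
        (a : ((k ≃ₐ[ℚ] k) ⧸ F.fixingSubgroup) → k)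
        (y : (k ≃ₐ[ℚ] k) ⧸ F.fixingSubgroup),
        (Ψ p) a y = ((p.2 (p.1.symm y) : k ≃ₐ[ℚ] k)) (a (p.1.symm y)) :=
  wreath_iso_aut_of_pi_general k F
end
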